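/- arXiv:2008.01497 — 2 statements merged into one kernel-verified Lean document; each statement's English description precedes it below -/
import Mathlib

section
/- The fixed point of the modified BSCP iteration is the greatest subautomaton of A_trim (with respect to the subsystem order) that is trim and satisfies both the controllability condition (every uncontrollable event feasible in A at a surviving state survives) and the race-free condition; i.e., any subautomaton H' ⊑ A_trim satisfying these conditions satisfies H' ⊑ H_∞. -/
/-! Both removal conditions only ask for transitions to survive, so `goodStates`, and with it
`stepBSCP`, is monotone. A trim, controllable, race-free `H'` is a post-fixed point,
`H' ⊆ stepBSCP H'`, so monotonicity carries `H' ⊆ A_trim` through every iterate. At a fixed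
point `H = stepBSCP H ⊆ goodStates H ⊆ H`, which is trimness plus the two conditions. -/

/-- Active events of state `a` within the subautomaton with state set `H`. -/
def ActiveIn {S Ev : Type*} (δ : S → Ev → Option S) (H : Set S) (a : S) :
    Set Ev :=
  {ev | ∃ b ∈ H, δ a ev = some b}

/-- Reachability from `a0` staying inside the set `allowed`. -/
inductive ReachIn {S Ev : Type*} (δ : S → Ev → Option S) (allowed : Set S)
    (a0 : S) : S → Prop where
  | base : a0 ∈ allowed → ReachIn δ allowed a0 a0
  | step : ∀ a ev b, ReachIn δ allowed a0 a → δ a ev = some b →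
      b ∈ allowed → ReachIn δ allowed a0 b

/-- States of `H` satisfying the controllability and race-free conditions. -/
def goodStates {S Ev E : Type*} (δ : S → Ev → Option S) (Aset : Set S)
    (Euc : Set Ev) (obsEv : E → Ev) (delEv : E → Ev) (H : Set S) : Set S :=
  {a ∈ H |
    (∀ ev ∈ Euc, ev ∈ ActiveIn δ Aset a → ev ∈ ActiveIn δ H a) ∧
    (∀ e : E, obsEv e ∈ ActiveIn δ Aset a →
      (obsEv e ∈ ActiveIn δ H a ∨ delEv e ∈ ActiveIn δ H a))}

/-- One iteration of the modified BSCP algorithm. -/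
def stepBSCP {S Ev E : Type*} (δ : S → Ev → Option S) (Aset : Set S)
    (Euc : Set Ev) (obsEv : E → Ev) (delEv : E → Ev) (a0 : S) (H : Set S) :
    Set S :=
  {b | ReachIn δ (goodStates δ Aset Euc obsEv delEv H) a0 b}

/-- Trimness of a subautomaton: every state is reachable from `a0` within it. -/
def TrimCond {S Ev : Type*} (δ : S → Ev → Option S) (a0 : S) (H : Set S) : Prop :=
  ∀ a ∈ H, ReachIn δ H a0 a

/-- Controllability: every uncontrollable event feasible in `A` at a surviving
state survives. -/
def CtrlCond {S Ev : Type*} (δ : S → Ev → Option S) (Aset : Set S)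
    (Euc : Set Ev) (H : Set S) : Prop :=
  ∀ a ∈ H, ∀ ev ∈ Euc, ev ∈ ActiveIn δ Aset a → ev ∈ ActiveIn δ H a

/-- Race-freeness: every feasible observable event keeps `e` or `e_d`. -/
def RaceCond {S Ev E : Type*} (δ : S → Ev → Option S) (Aset : Set S)
    (obsEv : E → Ev) (delEv : E → Ev) (H : Set S) : Prop :=
  ∀ a ∈ H, ∀ e : E, obsEv e ∈ ActiveIn δ Aset a →
    (obsEv e ∈ ActiveIn δ H a ∨ delEv e ∈ ActiveIn δ H a)

section

variable {S Ev E : Type*} {δ : S → Ev → Option S} {Aset : Set S} {Euc : Set Ev}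
  {obsEv delEv : E → Ev} {a0 : S}

namespace ReachIn

lemma mono {A B : Set S} (hAB : A ⊆ B) {a : S} (h : ReachIn δ A a0 a) : ReachIn δ B a0 a := by
  induction h with
  | base h => exact base (hAB h)
  | step a ev b _ hδ hb ih => exact step a ev b ih hδ (hAB hb)

lemma mem {A : Set S} {a : S} (h : ReachIn δ A a0 a) : a ∈ A := by
  cases h with
  | base h => exact h
  | step _ _ _ _ _ hb => exact hb

end ReachIn

lemma ActiveIn.mono {A B : Set S} (hAB : A ⊆ B) {a : S} {ev : Ev}
    (h : ev ∈ ActiveIn δ A a) : ev ∈ ActiveIn δ B a :=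
  let ⟨b, hb, hδ⟩ := h
  ⟨b, hAB hb, hδ⟩

lemma goodStates_subset (H : Set S) : goodStates δ Aset Euc obsEv delEv H ⊆ H :=
  fun _ ha => ha.1

lemma goodStates_mono : Monotone (goodStates δ Aset Euc obsEv delEv) := by
  intro H K hHK a ⟨ha, hctrl, hrace⟩
  refine ⟨hHK ha, fun ev hev hact => ActiveIn.mono hHK (hctrl ev hev hact), fun e hact => ?_⟩
  exact (hrace e hact).imp (ActiveIn.mono hHK) (ActiveIn.mono hHK)

lemma subset_goodStates_iff {H : Set S} :
    H ⊆ goodStates δ Aset Euc obsEv delEv H ↔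
      CtrlCond δ Aset Euc H ∧ RaceCond δ Aset obsEv delEv H :=
  ⟨fun h => ⟨fun _ ha => (h ha).2.1, fun _ ha => (h ha).2.2⟩,
    fun ⟨hctrl, hrace⟩ a ha => ⟨ha, hctrl a ha, hrace a ha⟩⟩

lemma stepBSCP_mono : Monotone (stepBSCP δ Aset Euc obsEv delEv a0) :=
  fun _ _ hHK _ ha => ReachIn.mono (goodStates_mono hHK) ha

lemma stepBSCP_subset_goodStates (H : Set S) :
    stepBSCP δ Aset Euc obsEv delEv a0 H ⊆ goodStates δ Aset Euc obsEv delEv H :=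
  fun _ ha => ReachIn.mem ha

lemma TrimCond.subset_stepBSCP {H : Set S} (htrim : TrimCond δ a0 H)
    (hgood : H ⊆ goodStates δ Aset Euc obsEv delEv H) :
    H ⊆ stepBSCP δ Aset Euc obsEv delEv a0 H :=
  fun a ha => (htrim a ha).mono hgood

lemma trimCond_of_stepBSCP_eq {H : Set S} (hfix : stepBSCP δ Aset Euc obsEv delEv a0 H = H) :
    TrimCond δ a0 H := by
  intro a ha
  rw [← hfix] at ha
  exact ha.mono (goodStates_subset H)

lemma subset_goodStates_of_stepBSCP_eq {H : Set S}
    (hfix : stepBSCP δ Aset Euc obsEv delEv a0 H = H) :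
    H ⊆ goodStates δ Aset Euc obsEv delEv H := by
  conv_lhs => rw [← hfix]
  exact stepBSCP_subset_goodStates H

end

/-- The fixed point `H_∞` of the modified BSCP iteration is the greatest
subautomaton of `A_trim` that is trim and satisfies the controllability and
race-free conditions: `H_∞` satisfies them, and any `H' ⊑ A_trim` satisfying
them satisfies `H' ⊑ H_∞`. -/
theorem stmt16 {S Ev E : Type*} (δ : S → Ev → Option S) (Aset : Set S)
    (Euc : Set Ev) (obsEv : E → Ev) (delEv : E → Ev) (a0 : S) (Atrim : Set S)
    (n : ℕ)
    (hfix : stepBSCP δ Aset Euc obsEv delEv a0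
        ((stepBSCP δ Aset Euc obsEv delEv a0)^[n] Atrim) =
      (stepBSCP δ Aset Euc obsEv delEv a0)^[n] Atrim) :
    (TrimCond δ a0 ((stepBSCP δ Aset Euc obsEv delEv a0)^[n] Atrim) ∧
     CtrlCond δ Aset Euc ((stepBSCP δ Aset Euc obsEv delEv a0)^[n] Atrim) ∧
     RaceCond δ Aset obsEv delEv
       ((stepBSCP δ Aset Euc obsEv delEv a0)^[n] Atrim)) ∧
    (∀ H' ⊆ Atrim, TrimCond δ a0 H' → CtrlCond δ Aset Euc H' →
      RaceCond δ Aset obsEv delEv H' →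
        H' ⊆ (stepBSCP δ Aset Euc obsEv delEv a0)^[n] Atrim) := by
  refine ⟨⟨trimCond_of_stepBSCP_eq hfix,
    subset_goodStates_iff.1 (subset_goodStates_of_stepBSCP_eq hfix)⟩, ?_⟩
  intro H' hsub htrim hctrl hrace
  have hpost : H' ⊆ stepBSCP δ Aset Euc obsEv delEv a0 H' :=
    htrim.subset_stepBSCP (subset_goodStates_iff.2 ⟨hctrl, hrace⟩)
  calc H' ⊆ (stepBSCP δ Aset Euc obsEv delEv a0)^[n] H' :=
        stepBSCP_mono.monotone_iterate_of_le_map hpost (Nat.zero_le n)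
    _ ⊆ (stepBSCP δ Aset Euc obsEv delEv a0)^[n] Atrim := (stepBSCP_mono.iterate n) hsub
end

section
/- The AIDA has at most 2^{|X|+1}·|Q̃| states, and if all events are observable (Σ_uo = ∅) then the reachable AIDA has at most 2·|X|·|Q̃| states. -/
/-- Edited symbols: genuine, inserted (`Σ_a^i`) and deleted (`Σ_a^d`) events. -/
inductive Ed (E : Type*) where
  | plain (e : E)
  | ins (e : E)
  | del (e : E)

/-- Extension of the plant transition function to strings. -/
def deltaStar {X E : Type*} (δ : X → E → Option X) : X → List E → Option X
  | x, [] => some x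
  | x, e :: s => (δ x e).bind fun y => deltaStar δ y s

/-- Unobservable reach `UR_γ(S)` (strings over `Σ_uo ∩ γ`). -/
def URset {X E : Type*} (δ : X → E → Option X) (uo : Set E) (γ : Set E)
    (S : Set X) : Set X :=
  {x | ∃ u ∈ S, ∃ s : List E, (∀ e ∈ s, e ∈ uo ∧ e ∈ γ) ∧ deltaStar δ u s = some x}

/-- Observable reach `NX_e(S)`. -/
def NXset {X E : Type*} (δ : X → E → Option X) (e : E) (S : Set X) : Set X :=
  {x | ∃ u ∈ S, δ u e = some x}

/-- An Insertion-Deletion Attack structure (IDA), control decisions `γ ⊆ Σ`. -/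
structure IDA (X Q E : Type*) where
  QS : Set (Set X × Q)
  QE : Set (Set X × Q)
  hSE : (Set X × Q) → Set E → Option (Set X × Q)
  hES : (Set X × Q) → Ed E → Option (Set X × Q)

/-- States of an IDA reachable from the initial S-state `y0`. -/
inductive ReachIDA {X Q E : Type*} (A : IDA X Q E) (y0 : Set X × Q) :
    (Set X × Q) → Prop where
  | base : ReachIDA A y0 y0
  | se : ∀ y γ z, ReachIDA A y0 y → A.hSE y γ = some z → ReachIDA A y0 z
  | es : ∀ z ev y, ReachIDA A y0 z → A.hES z ev = some y → ReachIDA A y0 y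

/-! Counting all of `2^X × Q̃` once for the S-states and once for the E-states gives the first
bound. Without unobservable events `UR_γ` is the identity, and for a deterministic plant `NX_e`
sends a singleton with an enabled event to a singleton, so every reachable state has a
singleton estimate and lies in the image of `X × Q̃`. -/

lemma URset_of_uo_empty {X E : Type*} (δ : X → E → Option X) (γ : Set E) (S : Set X) :
    URset δ ∅ γ S = S := by
  ext x
  constructor
  · rintro ⟨u, hu, s, hs, hd⟩
    cases s with
    | nil => cases hd; exact hu
    | cons e t => exact absurd (hs e List.mem_cons_self).1 (Set.notMem_empty e)
  · intro hx
    exact ⟨x, hx, [], by simp, rfl⟩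

lemma NXset_singleton {X E : Type*} {δ : X → E → Option X} {e : E} {x v : X}
    (h : δ x e = some v) : NXset δ e {x} = {v} := by
  ext w
  simp [NXset, h, eq_comm]

lemma ReachIDA.exists_fst_eq_singleton {X Q E : Type*} {δ : X → E → Option X}
    {A : IDA X Q E} {x0 : X} {q0 : Q}
    (hSE : ∀ y γ z, A.hSE y γ = some z → z.1 = y.1)
    (hES : ∀ z ev y, A.hES z ev = some y →
      (∃ e : E, (∃ x ∈ z.1, (δ x e).isSome) ∧ y.1 = NXset δ e z.1) ∨ y.1 = z.1)
    {w : Set X × Q} (hw : ReachIDA A ({x0}, q0) w) : ∃ x : X, w.1 = {x} := by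
  induction hw with
  | base => exact ⟨x0, rfl⟩
  | se y γ z _ h ih => exact hSE y γ z h ▸ ih
  | es z ev y _ h ih =>
      obtain ⟨x, hx⟩ := ih
      rcases hES z ev y h with ⟨e, ⟨x', hx', hsome⟩, hy⟩ | hy
      · rw [hx, Set.mem_singleton_iff] at hx'
        subst hx'
        obtain ⟨v, hv⟩ := Option.isSome_iff_exists.mp hsome
        exact ⟨v, by rw [hy, hx, NXset_singleton hv]⟩
      · exact ⟨x, hy.trans hx⟩

lemma ncard_le_card_set_prod {X Q : Type*} [Fintype X] [Fintype Q] (S : Set (Set X × Q)) :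
    S.ncard ≤ 2 ^ Fintype.card X * Fintype.card Q := by
  calc S.ncard ≤ Nat.card (Set X × Q) := Set.ncard_le_card S
    _ = 2 ^ Fintype.card X * Fintype.card Q := by
      simp only [Nat.card_eq_fintype_card, Fintype.card_prod, Fintype.card_set]

lemma ncard_le_of_forall_fst_singleton {X Q : Type*} [Fintype X] [Fintype Q]
    {S : Set (Set X × Q)} (hS : ∀ w ∈ S, ∃ x : X, w.1 = {x}) :
    S.ncard ≤ Fintype.card X * Fintype.card Q := by
  let f : X × Q → Set X × Q := fun p => ({p.1}, p.2)
  have hf : Function.Injective f := fun p p' h => by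
    simp only [f, Prod.mk.injEq, Set.singleton_eq_singleton_iff] at h
    exact Prod.ext h.1 h.2
  have hSf : S ⊆ Set.range f := fun w hw => by
    obtain ⟨x, hx⟩ := hS w hw
    exact ⟨(x, w.2), by simp [f, ← hx]⟩
  calc S.ncard ≤ (Set.range f).ncard := Set.ncard_le_ncard hSf
    _ = Fintype.card X * Fintype.card Q := by
      rw [Set.ncard_range_of_injective hf, Nat.card_eq_fintype_card, Fintype.card_prod]

/-- The AIDA has at most `2^{|X|+1}·|Q̃|` states; and if all events are
observable (`Σ_uo = ∅`) then, all its states being reachable from the initial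
state `({x₀}, q₀)` via transitions of the shape prescribed by Definition 4, it
has at most `2·|X|·|Q̃|` states. -/
theorem stmt17 {X Q E : Type*} [Fintype X] [Fintype Q]
    (δ : X → E → Option X) (uo : Set E) (A : IDA X Q E) (x0 : X) (q0 : Q)
    (hreach : ∀ w ∈ A.QS ∪ A.QE, ReachIDA A ({x0}, q0) w)
    (hSEshape : ∀ y γ z, A.hSE y γ = some z → z = (URset δ uo γ y.1, y.2))
    (hESshape : ∀ z ev y, A.hES z ev = some y →
      (∃ e : E, (ev = Ed.plain e ∨ ev = Ed.del e) ∧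
        (∃ x ∈ z.1, (δ x e).isSome) ∧ y.1 = NXset δ e z.1) ∨
      (∃ e : E, ev = Ed.ins e ∧ y.1 = z.1)) :
    A.QS.ncard + A.QE.ncard ≤ 2 ^ (Fintype.card X + 1) * Fintype.card Q ∧
    (uo = ∅ →
      A.QS.ncard + A.QE.ncard ≤ 2 * Fintype.card X * Fintype.card Q) := by
  constructor
  · have hQS := ncard_le_card_set_prod A.QS
    have hQE := ncard_le_card_set_prod A.QE
    rw [pow_succ]
    linarith
  · rintro rfl
    have hSE : ∀ y γ z, A.hSE y γ = some z → z.1 = y.1 := fun y γ z h => by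
      rw [hSEshape y γ z h, URset_of_uo_empty]
    have hES : ∀ z ev y, A.hES z ev = some y →
        (∃ e : E, (∃ x ∈ z.1, (δ x e).isSome) ∧ y.1 = NXset δ e z.1) ∨ y.1 = z.1 :=
      fun z ev y h => (hESshape z ev y h).imp (fun ⟨e, _, he⟩ => ⟨e, he⟩) (fun ⟨_, _, he⟩ => he)
    have hsingleton : ∀ w ∈ A.QS ∪ A.QE, ∃ x : X, w.1 = {x} := fun w hw =>
      (hreach w hw).exists_fst_eq_singleton hSE hES
    have hQS := ncard_le_of_forall_fst_singleton fun w hw => hsingleton w (Or.inl hw)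
    have hQE := ncard_le_of_forall_fst_singleton fun w hw => hsingleton w (Or.inr hw)
    linarith
end
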